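/- Let $n \ge 3$, $d \ge 2$, $l \in \{2,\dots,d\}$, $k \in \{3,\dots,n\}$, and let $X \in \mathbb{R}^{n \times d}$ be the Case-1 matrix with rows $X_1 = -\tfrac{1}{\sqrt{2}} e_1 + \tfrac{1}{\sqrt{2}} e_l$, $X_k = e_1$, and $X_i = \tfrac{1}{\sqrt{2}} e_1 + \tfrac{1}{\sqrt{2}} e_l$ for all $i \in \{2,\dots,n\} \setminus \{k\}$. Let $0 < \varepsilon < 0.04$ and let $\bar{w} \in \mathbb{B}_d$ satisfy $\min_{i \in \{1,\dots,n\}} \langle X_i, \bar{w} \rangle \ge \tfrac{1}{\sqrt{4+2\sqrt{2}}} - \varepsilon$. Then $\bar{w}_1 > 0.34$, $\bar{w}_l > 0.82$, and $\bar{w}_j < \bar{w}_l$ for every $j \in \{2,\dots,d\}$ with $j \ne l$; in particular $l = \arg\max_{j \in \{2,\dots,d\}} \bar{w}_j$ and no coordinate among $\bar{w}_2,\dots,\bar{w}_d$ other than $\bar{w}_l$ can exceed $0.82$. -/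

import Mathlib

set_option maxHeartbeats 1000000


/-- Decoding step of the linear-classification lower bound, Case 1: any
`ε`-approximate solution reveals the hidden column index `l` as the argmax of
the coordinates `w̄_2, …, w̄_d`. -/
theorem case1_linear_classification_decoding (n d : ℕ) (hn : 3 ≤ n) (hd : 2 ≤ d)
    (l : Fin d) (hl : (l : ℕ) ≠ 0)
    (k : Fin n) (hk : 2 ≤ (k : ℕ))
    (X : Fin n → EuclideanSpace ℝ (Fin d))
    (hX1 : ∀ i : Fin n, (i : ℕ) = 0 →
      X i = -((Real.sqrt 2)⁻¹ • EuclideanSpace.single (⟨0, by omega⟩ : Fin d) (1 : ℝ))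
        + (Real.sqrt 2)⁻¹ • EuclideanSpace.single l (1 : ℝ))
    (hXk : X k = EuclideanSpace.single (⟨0, by omega⟩ : Fin d) (1 : ℝ))
    (hXi : ∀ i : Fin n, (i : ℕ) ≠ 0 → i ≠ k →
      X i = (Real.sqrt 2)⁻¹ • EuclideanSpace.single (⟨0, by omega⟩ : Fin d) (1 : ℝ)
        + (Real.sqrt 2)⁻¹ • EuclideanSpace.single l (1 : ℝ))
    (ε : ℝ) (hε0 : 0 < ε) (hε1 : ε < 0.04)
    (wbar : EuclideanSpace ℝ (Fin d)) (hwbar : ‖wbar‖ ≤ 1)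
    (happrox : ∀ i : Fin n,
      (inner ℝ (X i) wbar : ℝ) ≥ (Real.sqrt (4 + 2 * Real.sqrt 2))⁻¹ - ε) :
    wbar (⟨0, by omega⟩ : Fin d) > 0.34 ∧ wbar l > 0.82 ∧
      ∀ j : Fin d, (j : ℕ) ≠ 0 → j ≠ l → wbar j < wbar l ∧ wbar j ≤ 0.82 := by
  set z : Fin d := ⟨0, by omega⟩ with hz
  set a : ℝ := wbar z with ha
  set b : ℝ := wbar l with hb
  set c : ℝ := (Real.sqrt (4 + 2 * Real.sqrt 2))⁻¹ with hc
  -- sqrt 2 bounds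
  have h2nn : (0:ℝ) ≤ Real.sqrt 2 := Real.sqrt_nonneg 2
  have h2sq : Real.sqrt 2 ^ 2 = 2 := Real.sq_sqrt (by norm_num)
  have h2lo : (1.41421:ℝ) ≤ Real.sqrt 2 := by nlinarith
  have h2hi : Real.sqrt 2 ≤ 1.41422 := by nlinarith
  have h2pos : (0:ℝ) < Real.sqrt 2 := by linarith
  -- bound on c
  have hsnn : (0:ℝ) ≤ Real.sqrt (4 + 2 * Real.sqrt 2) := Real.sqrt_nonneg _
  have hssq : Real.sqrt (4 + 2 * Real.sqrt 2) ^ 2 = 4 + 2 * Real.sqrt 2 :=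
    Real.sq_sqrt (by nlinarith)
  have hshi : Real.sqrt (4 + 2 * Real.sqrt 2) ≤ 2.61314 := by nlinarith
  have hspos : (0:ℝ) < Real.sqrt (4 + 2 * Real.sqrt 2) := by nlinarith
  have hcpos : (0:ℝ) < c := by positivity
  have hclo : (0.38266:ℝ) ≤ c := by
    rw [hc, le_inv_comm₀ (by norm_num) hspos]
    linarith
  have hcε : (0.34266:ℝ) ≤ c - ε := by linarith
  -- constraint from X k : a ≥ c - ε
  have hA : c - ε ≤ a := by
    have h := happrox k
    rw [hXk] at h
    simpa [EuclideanSpace.inner_single_left, ha] using h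
  -- constraint from first row
  have hB : c - ε ≤ (Real.sqrt 2)⁻¹ * (b - a) := by
    have h := happrox ⟨0, by omega⟩
    rw [hX1 ⟨0, by omega⟩ rfl] at h
    have : (inner ℝ (-((Real.sqrt 2)⁻¹ • EuclideanSpace.single z (1 : ℝ))
        + (Real.sqrt 2)⁻¹ • EuclideanSpace.single l (1 : ℝ)) wbar : ℝ)
        = (Real.sqrt 2)⁻¹ * (b - a) := by
      simp [inner_add_left, inner_neg_left, real_inner_smul_left,
        EuclideanSpace.inner_single_left, ha, hb]
      ring
    rw [this] at h
    exact h
  have hba : Real.sqrt 2 * (c - ε) ≤ b - a := by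
    calc Real.sqrt 2 * (c - ε) ≤ Real.sqrt 2 * ((Real.sqrt 2)⁻¹ * (b - a)) :=
          mul_le_mul_of_nonneg_left hB h2nn
      _ = b - a := by field_simp
  have hprod : (1.41421:ℝ) * 0.34266 ≤ Real.sqrt 2 * (c - ε) :=
    mul_le_mul h2lo hcε (by norm_num) h2nn
  have hAlo : (0.34266:ℝ) ≤ a := le_trans hcε hA
  have hBlo : (0.8272:ℝ) ≤ b := by nlinarith
  have hzl : z ≠ l := by
    intro h; exact hl (by rw [← h])
  -- sum of squares bound
  have hsum : ∑ i : Fin d, (wbar i) ^ 2 ≤ 1 := by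
    have hne : ‖wbar‖ = Real.sqrt (∑ i : Fin d, (wbar i) ^ 2) := by
      rw [EuclideanSpace.norm_eq]
      congr 1
      exact Finset.sum_congr rfl (fun i _ => by rw [Real.norm_eq_abs, sq_abs])
    have hnn : (0:ℝ) ≤ ∑ i : Fin d, (wbar i) ^ 2 :=
      Finset.sum_nonneg fun i _ => sq_nonneg _
    nlinarith [Real.sq_sqrt hnn, hne ▸ hwbar, Real.sqrt_nonneg (∑ i : Fin d, (wbar i) ^ 2)]
  refine ⟨by linarith, by linarith, ?_⟩
  intro j hj0 hjl
  have hjz : j ≠ z := by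
    intro h; exact hj0 (by rw [h])
  have h3 : a ^ 2 + b ^ 2 + (wbar j) ^ 2 ≤ ∑ i : Fin d, (wbar i) ^ 2 := by
    have hsub : ({z, l, j} : Finset (Fin d)) ⊆ Finset.univ := Finset.subset_univ _
    have := Finset.sum_le_sum_of_subset_of_nonneg hsub
      (fun i _ _ => sq_nonneg (wbar i))
    have hval : ∑ i ∈ ({z, l, j} : Finset (Fin d)), (wbar i) ^ 2
        = a ^ 2 + b ^ 2 + (wbar j) ^ 2 := by
      rw [Finset.sum_insert (by simp [hzl, hjz.symm]),
        Finset.sum_insert (by simp [hjl.symm]), Finset.sum_singleton]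
      ring
    linarith [hval ▸ this]
  have hjsq : (wbar j) ^ 2 ≤ 0.19841 := by nlinarith
  have hjle : wbar j ≤ 0.4454 := by nlinarith [sq_nonneg (wbar j - 0.4454)]
  constructor
  · linarith
  · linarith
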